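/- Let Ω ⊂ ℝ³ be a bounded open set with Lipschitz boundary, and suppose the trace-free symmetric gradient of u ∈ [H¹(Ω)]³ (with Ω connected) vanishes, i.e. ε(u) − (1/3)div(u)·I = 0 weakly. Assume additionally u is smooth. Then u is a conformal Killing field: there exist a, b ∈ ℝ³, ρ ∈ ℝ, and Q ∈ 𝔰𝔬(3) such that u(x) = 2(a·x)x − |x|²a + ρx + Qx + b for all x ∈ Ω. -/

import Mathlib

open MeasureTheory Real Filter Matrix

noncomputable def pd (i : Fin 3) (f : (Fin 3 → ℝ) → ℝ) (x : Fin 3 → ℝ) : ℝ :=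
  fderiv ℝ f x (Pi.single i 1)

def dot3 (a x : Fin 3 → ℝ) : ℝ := ∑ i, a i * x i

noncomputable def divg (w : (Fin 3 → ℝ) → Fin 3 → ℝ) (x : Fin 3 → ℝ) : ℝ :=
  ∑ i, pd i (fun y => w y i) x

noncomputable def curl3 (w : (Fin 3 → ℝ) → Fin 3 → ℝ) (x : Fin 3 → ℝ) : Fin 3 → ℝ :=
  ![pd 1 (fun y => w y 2) x - pd 2 (fun y => w y 1) x,
    pd 2 (fun y => w y 0) x - pd 0 (fun y => w y 2) x,
    pd 0 (fun y => w y 1) x - pd 1 (fun y => w y 0) x]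

noncomputable def tfsym (u : (Fin 3 → ℝ) → Fin 3 → ℝ) (x : Fin 3 → ℝ) (i j : Fin 3) : ℝ :=
  (pd i (fun y => u y j) x + pd j (fun y => u y i) x) / 2
    - (1 / 3) * divg u x * (if i = j then 1 else 0)

/-- The conformal Killing field `x ↦ 2(a·x)x − |x|²a + ρx + Qx + b`. -/
def ckField (a b : Fin 3 → ℝ) (ρ : ℝ) (Q : Matrix (Fin 3) (Fin 3) ℝ) :
    (Fin 3 → ℝ) → Fin 3 → ℝ :=
  fun x j => 2 * dot3 a x * x j - dot3 x x * a j + ρ * x j + Q.mulVec x j + b j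

open ContDiff

abbrev E3 := Fin 3 → ℝ

/-! ### basic pd calculus -/

lemma clm_zero (L : E3 →L[ℝ] ℝ) (h : ∀ i, L (Pi.single i 1) = 0) : L = 0 := by
  ext v
  have hv : v = ∑ i, v i • (Pi.single i (1:ℝ) : E3) := by
    simp [← Pi.single_smul]
    exact (Finset.univ_sum_single v).symm
  rw [hv]
  simp [h]

lemma pd_congr {f g : E3 → ℝ} {s : Set E3} (hs : IsOpen s) (h : ∀ y ∈ s, f y = g y)
    {x : E3} (hx : x ∈ s) (i : Fin 3) : pd i f x = pd i g x := by
  have : f =ᶠ[nhds x] g := eventually_of_mem (hs.mem_nhds hx) h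
  unfold pd; rw [this.fderiv_eq]

lemma pd_add {f g : E3 → ℝ} {x : E3} (hf : DifferentiableAt ℝ f x)
    (hg : DifferentiableAt ℝ g x) (i : Fin 3) :
    pd i (fun y => f y + g y) x = pd i f x + pd i g x := by
  unfold pd; rw [fderiv_fun_add hf hg]; rfl

lemma pd_sub {f g : E3 → ℝ} {x : E3} (hf : DifferentiableAt ℝ f x)
    (hg : DifferentiableAt ℝ g x) (i : Fin 3) :
    pd i (fun y => f y - g y) x = pd i f x - pd i g x := by
  unfold pd; rw [fderiv_fun_sub hf hg]; rfl

lemma pd_const (c : ℝ) (x : E3) (i : Fin 3) : pd i (fun _ => c) x = 0 := by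
  unfold pd; rw [fderiv_fun_const]; rfl

lemma pd_const_mul {f : E3 → ℝ} {x : E3} (hf : DifferentiableAt ℝ f x) (c : ℝ) (i : Fin 3) :
    pd i (fun y => c * f y) x = c * pd i f x := by
  unfold pd; rw [fderiv_const_mul hf]; rfl

lemma pd_diffAt {f : E3 → ℝ} {s : Set E3} (hs : IsOpen s) (hf : ContDiffOn ℝ ∞ f s)
    {x : E3} (hx : x ∈ s) : DifferentiableAt ℝ f x :=
  (hf.differentiableOn (by norm_num)).differentiableAt (hs.mem_nhds hx)

lemma pd_smooth {f : E3 → ℝ} {s : Set E3} (hs : IsOpen s) (hf : ContDiffOn ℝ ∞ f s) (i : Fin 3) :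
    ContDiffOn ℝ ∞ (pd i f) s := by
  have h := (contDiffOn_infty_iff_fderiv_of_isOpen hs).1 hf
  exact (ContinuousLinearMap.apply ℝ ℝ (Pi.single i 1 : E3)).contDiff.comp_contDiffOn h.2

lemma pd_comm {f : E3 → ℝ} {s : Set E3} (hs : IsOpen s) (hf : ContDiffOn ℝ ∞ f s)
    {x : E3} (hx : x ∈ s) (i j : Fin 3) : pd i (pd j f) x = pd j (pd i f) x := by
  have h1 := (contDiffOn_infty_iff_fderiv_of_isOpen hs).1 hf
  have hdf : DifferentiableAt ℝ (fderiv ℝ f) x :=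
    (h1.2.differentiableOn (by norm_num)).differentiableAt (hs.mem_nhds hx)
  have hev : ∀ᶠ y in nhds x, HasFDerivAt f (fderiv ℝ f y) y := by
    filter_upwards [hs.eventually_mem hx] with y hy
    exact (pd_diffAt hs hf hy).hasFDerivAt
  have hsym := second_derivative_symmetric_of_eventually hev hdf.hasFDerivAt
  have key : ∀ (a b : Fin 3),
      pd a (pd b f) x = (fderiv ℝ (fderiv ℝ f) x) (Pi.single a 1) (Pi.single b 1) := by
    intro a b
    rw [show pd a (pd b f) x = fderiv ℝ (fun y => (ContinuousLinearMap.apply ℝ ℝ (Pi.single b 1 : E3)) (fderiv ℝ f y)) x (Pi.single a 1) from rfl]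
    have hc : HasFDerivAt (fun y => (ContinuousLinearMap.apply ℝ ℝ (Pi.single b 1 : E3)) (fderiv ℝ f y))
        ((ContinuousLinearMap.apply ℝ ℝ (Pi.single b 1 : E3)).comp (fderiv ℝ (fderiv ℝ f) x)) x :=
      (ContinuousLinearMap.apply ℝ ℝ (Pi.single b 1 : E3)).hasFDerivAt.comp x hdf.hasFDerivAt
    rw [hc.fderiv]
    simp
  rw [key i j, key j i, hsym]

lemma const_on_ball {f : E3 → ℝ} {c : E3} {r : ℝ} (hr : 0 < r)
    (hf : DifferentiableOn ℝ f (Metric.ball c r))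
    (h : ∀ y ∈ Metric.ball c r, ∀ i, pd i f y = 0) :
    ∀ y ∈ Metric.ball c r, f y = f c := by
  intro y hy
  refine (convex_ball c r).is_const_of_fderivWithin_eq_zero hf (fun z hz => ?_) hy
    (Metric.mem_ball_self hr)
  rw [fderivWithin_of_isOpen Metric.isOpen_ball hz]
  exact clm_zero _ (fun i => h z hz i)

/-! ### derivatives of the candidate field -/

lemma hasFDerivAt_coord (j : Fin 3) (x : E3) :
    HasFDerivAt (fun y : E3 => y j) (ContinuousLinearMap.proj j : E3 →L[ℝ] ℝ) x :=
  (ContinuousLinearMap.proj j : E3 →L[ℝ] ℝ).hasFDerivAt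

lemma hasFDerivAt_dot3 (a : E3) (x : E3) :
    HasFDerivAt (fun y => dot3 a y) (∑ i, a i • (ContinuousLinearMap.proj i : E3 →L[ℝ] ℝ)) x := by
  have := HasFDerivAt.sum (fun i (_ : i ∈ Finset.univ) =>
    (hasFDerivAt_coord i x).const_mul (a i))
  exact this

lemma hasFDerivAt_quad (x : E3) :
    HasFDerivAt (fun y => dot3 y y)
      (∑ i, (x i • (ContinuousLinearMap.proj i : E3 →L[ℝ] ℝ)
        + x i • (ContinuousLinearMap.proj i : E3 →L[ℝ] ℝ))) x := by
  have := HasFDerivAt.sum (fun i (_ : i ∈ Finset.univ) =>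
    (hasFDerivAt_coord i x).mul (hasFDerivAt_coord i x))
  exact this

lemma hasFDerivAt_ck (a b : E3) (ρ : ℝ) (Q : Matrix (Fin 3) (Fin 3) ℝ) (k : Fin 3) (x : E3) :
    HasFDerivAt (fun y => ckField a b ρ Q y k)
      (((2 * dot3 a x) • (ContinuousLinearMap.proj k : E3 →L[ℝ] ℝ)
          + x k • (2:ℝ) • (∑ i, a i • (ContinuousLinearMap.proj i : E3 →L[ℝ] ℝ))
        - a k • (∑ i, (x i • (ContinuousLinearMap.proj i : E3 →L[ℝ] ℝ)
            + x i • (ContinuousLinearMap.proj i : E3 →L[ℝ] ℝ)))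
        + ρ • (ContinuousLinearMap.proj k : E3 →L[ℝ] ℝ)
        + ∑ i, Q k i • (ContinuousLinearMap.proj i : E3 →L[ℝ] ℝ))) x := by
  have h1 : HasFDerivAt (fun y => 2 * dot3 a y * y k)
      ((2 * dot3 a x) • (ContinuousLinearMap.proj k : E3 →L[ℝ] ℝ)
        + x k • (2:ℝ) • (∑ i, a i • (ContinuousLinearMap.proj i : E3 →L[ℝ] ℝ))) x := by
    have := ((hasFDerivAt_dot3 a x).const_mul 2).mul (hasFDerivAt_coord k x)
    exact this
  have h2 : HasFDerivAt (fun y => dot3 y y * a k)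
      (a k • (∑ i, (x i • (ContinuousLinearMap.proj i : E3 →L[ℝ] ℝ)
          + x i • (ContinuousLinearMap.proj i : E3 →L[ℝ] ℝ)))) x :=
    (hasFDerivAt_quad x).mul_const (a k)
  have h3 : HasFDerivAt (fun y => ρ * y k) (ρ • (ContinuousLinearMap.proj k : E3 →L[ℝ] ℝ)) x :=
    (hasFDerivAt_coord k x).const_mul ρ
  have h4 : HasFDerivAt (fun y : E3 => Q.mulVec y k)
      (∑ i, Q k i • (ContinuousLinearMap.proj i : E3 →L[ℝ] ℝ)) x :=
    hasFDerivAt_dot3 (Q k) x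
  exact (((h1.sub h2).add h3).add h4).add_const (b k)

lemma pd_ck (a b : E3) (ρ : ℝ) (Q : Matrix (Fin 3) (Fin 3) ℝ) (j k : Fin 3) (x : E3) :
    pd j (fun y => ckField a b ρ Q y k) x
      = 2 * a j * x k + 2 * dot3 a x * (if j = k then 1 else 0) - 2 * x j * a k
        + ρ * (if j = k then 1 else 0) + Q k j := by
  unfold pd
  rw [(hasFDerivAt_ck a b ρ Q k x).fderiv]
  simp [ContinuousLinearMap.sum_apply, Pi.single_apply, mul_add, Finset.mul_sum,
    Finset.sum_add_distrib, Finset.sum_ite_eq', mul_comm]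
  rcases eq_or_ne j k with h | h
  · subst h; simp; ring
  · simp [h, Ne.symm h]; ring

/-- the explicit first-derivative field of `ckField` -/
def pdckF (a : E3) (ρ : ℝ) (Q : Matrix (Fin 3) (Fin 3) ℝ) (j k : Fin 3) : E3 → ℝ :=
  fun y => 2 * a j * y k + 2 * dot3 a y * (if j = k then 1 else 0) - 2 * y j * a k
    + ρ * (if j = k then 1 else 0) + Q k j

lemma hasFDerivAt_pdckF (a : E3) (ρ : ℝ) (Q : Matrix (Fin 3) (Fin 3) ℝ) (j k : Fin 3) (x : E3) :
    HasFDerivAt (pdckF a ρ Q j k)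
      ((2 * a j) • (ContinuousLinearMap.proj k : E3 →L[ℝ] ℝ)
        + (if j = k then (1:ℝ) else 0) • (2:ℝ) • (∑ i, a i • (ContinuousLinearMap.proj i : E3 →L[ℝ] ℝ))
        - a k • (2:ℝ) • (ContinuousLinearMap.proj j : E3 →L[ℝ] ℝ)) x := by
  have h1 : HasFDerivAt (fun y : E3 => 2 * a j * y k)
      ((2 * a j) • (ContinuousLinearMap.proj k : E3 →L[ℝ] ℝ)) x :=
    (hasFDerivAt_coord k x).const_mul (2 * a j)
  have h2 : HasFDerivAt (fun y => 2 * dot3 a y * (if j = k then (1:ℝ) else 0))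
      ((if j = k then (1:ℝ) else 0) • (2:ℝ) • (∑ i, a i • (ContinuousLinearMap.proj i : E3 →L[ℝ] ℝ))) x :=
    ((hasFDerivAt_dot3 a x).const_mul 2).mul_const _
  have h3 : HasFDerivAt (fun y : E3 => 2 * y j * a k)
      (a k • (2:ℝ) • (ContinuousLinearMap.proj j : E3 →L[ℝ] ℝ)) x :=
    ((hasFDerivAt_coord j x).const_mul 2).mul_const (a k)
  exact (((h1.add h2).sub h3).add_const _).add_const _

lemma pd_pdckF (a : E3) (ρ : ℝ) (Q : Matrix (Fin 3) (Fin 3) ℝ) (i j k : Fin 3) (x : E3) :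
    pd i (pdckF a ρ Q j k) x
      = 2 * a j * (if i = k then 1 else 0) + 2 * a i * (if j = k then 1 else 0)
        - 2 * (if i = j then 1 else 0) * a k := by
  unfold pd
  rw [(hasFDerivAt_pdckF a ρ Q j k x).fderiv]
  simp [ContinuousLinearMap.sum_apply, Pi.single_apply, mul_add, Finset.mul_sum,
    Finset.sum_add_distrib, Finset.sum_ite_eq', mul_comm]
  rcases eq_or_ne i j with h | h <;> rcases eq_or_ne i k with h' | h' <;>
    rcases eq_or_ne j k with h'' | h'' <;>
      simp_all [Pi.single_apply, Finset.sum_ite_eq', eq_comm, Ne.symm] <;> ring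

/-! ### consequences of the conformal Killing equation -/

noncomputable def phiu (u : E3 → Fin 3 → ℝ) : E3 → ℝ := fun y => divg u y / 3

noncomputable def gu (u : E3 → Fin 3 → ℝ) (i : Fin 3) : E3 → ℝ := pd i (phiu u)

section main
variable {Ω : Set E3} {u : E3 → Fin 3 → ℝ}

lemma comp_smooth (hΩo : IsOpen Ω) (hu : ContDiffOn ℝ ∞ u Ω) (k : Fin 3) :
    ContDiffOn ℝ ∞ (fun y => u y k) Ω :=
  (ContinuousLinearMap.proj k : (Fin 3 → ℝ) →L[ℝ] ℝ).contDiff.comp_contDiffOn hu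

lemma phiu_smooth (hΩo : IsOpen Ω) (hu : ContDiffOn ℝ ∞ u Ω) :
    ContDiffOn ℝ ∞ (phiu u) Ω := by
  unfold phiu divg
  have : ContDiffOn ℝ ∞ (fun y => ∑ i, pd i (fun z => u z i) y) Ω := by
    apply ContDiffOn.sum
    intro i _
    exact pd_smooth hΩo (comp_smooth hΩo hu i) i
  exact this.div_const 3

lemma gu_smooth (hΩo : IsOpen Ω) (hu : ContDiffOn ℝ ∞ u Ω) (i : Fin 3) :
    ContDiffOn ℝ ∞ (gu u i) Ω :=
  pd_smooth hΩo (phiu_smooth hΩo hu) i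

lemma hsym (htf : ∀ x ∈ Ω, ∀ i j : Fin 3, tfsym u x i j = 0)
    {x : E3} (hx : x ∈ Ω) (i j : Fin 3) :
    pd i (fun y => u y j) x + pd j (fun y => u y i) x
      = 2 * phiu u x * (if i = j then 1 else 0) := by
  have := htf x hx i j
  unfold tfsym at this
  unfold phiu
  rcases eq_or_ne i j with h | h <;> simp [h] at this ⊢ <;> linarith

-- second derivative identity
lemma second_id (hΩo : IsOpen Ω) (hu : ContDiffOn ℝ ∞ u Ω)
    (htf : ∀ x ∈ Ω, ∀ i j : Fin 3, tfsym u x i j = 0)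
    {x : E3} (hx : x ∈ Ω) (i j k : Fin 3) :
    pd i (pd j (fun y => u y k)) x
      = (if j = k then 1 else 0) * gu u i x + (if i = k then 1 else 0) * gu u j x
        - (if i = j then 1 else 0) * gu u k x := by
  have hdiff : ∀ p q : Fin 3, DifferentiableAt ℝ (pd p (fun y => u y q)) x :=
    fun p q => pd_diffAt hΩo (pd_smooth hΩo (comp_smooth hΩo hu q) p) hx
  have hφd : DifferentiableAt ℝ (phiu u) x := pd_diffAt hΩo (phiu_smooth hΩo hu) hx
  have S : ∀ p q r : Fin 3,
      pd p (pd q (fun y => u y r)) x + pd p (pd r (fun y => u y q)) x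
        = 2 * (if q = r then 1 else 0) * gu u p x := by
    intro p q r
    have hcg : pd p (fun y => pd q (fun z => u z r) y + pd r (fun z => u z q) y) x
        = pd p (fun y => (2 * (if q = r then 1 else 0)) * phiu u y) x := by
      apply pd_congr hΩo (fun y hy => ?_) hx
      rw [hsym htf hy q r]; ring
    rw [pd_add (hdiff q r) (hdiff r q)] at hcg
    rw [pd_const_mul hφd] at hcg
    exact hcg
  have c1 : pd i (pd k (fun y => u y j)) x = pd k (pd i (fun y => u y j)) x :=
    pd_comm hΩo (comp_smooth hΩo hu j) hx i k
  have c2 : pd j (pd k (fun y => u y i)) x = pd k (pd j (fun y => u y i)) x :=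
    pd_comm hΩo (comp_smooth hΩo hu i) hx j k
  have c3 : pd j (pd i (fun y => u y k)) x = pd i (pd j (fun y => u y k)) x :=
    pd_comm hΩo (comp_smooth hΩo hu k) hx j i
  have s1 := S i j k
  have s2 := S j i k
  have s3 := S k i j
  linarith

-- vanishing Hessian of phiu
lemma H_zero (hΩo : IsOpen Ω) (hu : ContDiffOn ℝ ∞ u Ω)
    (htf : ∀ x ∈ Ω, ∀ i j : Fin 3, tfsym u x i j = 0)
    {x : E3} (hx : x ∈ Ω) (l i : Fin 3) :
    pd l (gu u i) x = 0 := by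
  have hgd : ∀ p : Fin 3, DifferentiableAt ℝ (gu u p) x :=
    fun p => pd_diffAt hΩo (gu_smooth hΩo hu p) hx
  set H : Fin 3 → Fin 3 → ℝ := fun p q => pd p (gu u q) x with hH
  have Hsym : ∀ p q, H p q = H q p := by
    intro p q
    exact pd_comm hΩo (phiu_smooth hΩo hu) hx p q
  -- differentiate the second-derivative identity
  have T : ∀ l i j k : Fin 3,
      pd l (pd i (pd j (fun y => u y k))) x
        = (if j = k then 1 else 0) * H l i + (if i = k then 1 else 0) * H l j
          - (if i = j then 1 else 0) * H l k := by
    intro l i j k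
    have hcg : pd l (fun y => pd i (pd j (fun z => u z k)) y) x
        = pd l (fun y => ((if j = k then (1:ℝ) else 0) * gu u i y
            + (if i = k then 1 else 0) * gu u j y)
            - (if i = j then 1 else 0) * gu u k y) x := by
      apply pd_congr hΩo (fun y hy => ?_) hx
      rw [second_id hΩo hu htf hy i j k]
    have e1 : DifferentiableAt ℝ (fun y => (if j = k then (1:ℝ) else 0) * gu u i y) x :=
      (hgd i).const_mul _
    have e2 : DifferentiableAt ℝ (fun y => (if i = k then (1:ℝ) else 0) * gu u j y) x :=
      (hgd j).const_mul _
    have e3 : DifferentiableAt ℝ (fun y => (if i = j then (1:ℝ) else 0) * gu u k y) x :=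
      (hgd k).const_mul _
    rw [pd_sub (e1.fun_add e2) e3, pd_add e1 e2, pd_const_mul (hgd i), pd_const_mul (hgd j),
      pd_const_mul (hgd k)] at hcg
    exact hcg
  have Rel : ∀ l i j k : Fin 3,
      (if j = k then (1:ℝ) else 0) * H l i + (if i = k then 1 else 0) * H l j
          - (if i = j then 1 else 0) * H l k
        = (if j = k then 1 else 0) * H i l + (if l = k then 1 else 0) * H i j
          - (if l = j then 1 else 0) * H i k := by
    intro l i j k
    have := pd_comm hΩo (pd_smooth hΩo (comp_smooth hΩo hu k) j) hx l i
    rw [T l i j k, T i l j k] at this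
    exact this
  have d1 := Rel 0 1 0 1
  have d2 := Rel 1 2 1 2
  have d3 := Rel 2 0 2 0
  simp at d1 d2 d3
  have h00 : H 0 0 = 0 := by linarith
  have h11 : H 1 1 = 0 := by linarith
  have h22 : H 2 2 = 0 := by linarith
  have h01 : H 0 1 = 0 := by have := Rel 0 2 1 2; simpa using this
  have h02 : H 0 2 = 0 := by have := Rel 0 1 2 1; simpa using this
  have h12 : H 1 2 = 0 := by have := Rel 1 0 2 0; simpa using this
  have h10 : H 1 0 = 0 := by rw [Hsym]; exact h01
  have h20 : H 2 0 = 0 := by rw [Hsym]; exact h02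
  have h21 : H 2 1 = 0 := by rw [Hsym]; exact h12
  show H l i = 0
  fin_cases l <;> fin_cases i <;> assumption

end main


theorem stmt10 (Ω : Set (Fin 3 → ℝ)) (hΩo : IsOpen Ω)
    (hΩb : Bornology.IsBounded Ω) (hΩc : IsConnected Ω)
    (u : (Fin 3 → ℝ) → Fin 3 → ℝ) (hu : ContDiffOn ℝ (⊤ : ℕ∞) u Ω)
    (htf : ∀ x ∈ Ω, ∀ i j : Fin 3, tfsym u x i j = 0) :
    ∃ (a b : Fin 3 → ℝ) (ρ : ℝ) (Q : Matrix (Fin 3) (Fin 3) ℝ),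
      Qᵀ = -Q ∧ ∀ x ∈ Ω, u x = ckField a b ρ Q x := by
  obtain ⟨x₀, hx₀⟩ := hΩc.nonempty
  have hu' : ContDiffOn ℝ ∞ u Ω := hu.of_le (by simp)
  set a : Fin 3 → ℝ := fun i => gu u i x₀ / 2 with ha
  set ρ : ℝ := phiu u x₀ - 2 * dot3 a x₀ with hρ
  set Q : Matrix (Fin 3) (Fin 3) ℝ := fun k j =>
    pd j (fun y => u y k) x₀ - 2 * a j * x₀ k - 2 * dot3 a x₀ * (if j = k then 1 else 0)
      + 2 * x₀ j * a k - ρ * (if j = k then 1 else 0) with hQ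
  set b : Fin 3 → ℝ := fun k =>
    u x₀ k - (2 * dot3 a x₀ * x₀ k - dot3 x₀ x₀ * a k + ρ * x₀ k + Q.mulVec x₀ k) with hb
  have hckd : ∀ (k : Fin 3), Differentiable ℝ (fun y => ckField a b ρ Q y k) :=
    fun k y => (hasFDerivAt_ck a b ρ Q k y).differentiableAt
  have hpdckd : ∀ (j k : Fin 3), Differentiable ℝ (pdckF a ρ Q j k) :=
    fun j k y => (hasFDerivAt_pdckF a ρ Q j k y).differentiableAt
  -- the jet-matching predicate
  set P : E3 → Prop := fun x =>
    (∀ k, u x k = ckField a b ρ Q x k) ∧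
    (∀ j k, pd j (fun y => u y k) x = pdckF a ρ Q j k x) ∧
    (∀ i, gu u i x = 2 * a i) with hP
  -- P holds at the base point
  have hPx₀ : P x₀ := by
    refine ⟨fun k => ?_, fun j k => ?_, fun i => ?_⟩
    · simp only [hb, ckField]; ring
    · simp only [pdckF, hQ]; ring
    · simp only [ha]; ring
  -- P propagates through balls
  have hball : ∀ x, x ∈ Ω → P x → ∀ ε, 0 < ε → Metric.ball x ε ⊆ Ω →
      ∀ y ∈ Metric.ball x ε, P y := by
    intro x hxΩ hPx ε hε hsub
    have step1 : ∀ i, ∀ z ∈ Metric.ball x ε, gu u i z = 2 * a i := by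
      intro i z hz
      have hconst := const_on_ball hε
        (((gu_smooth hΩo hu' i).differentiableOn (by norm_num)).mono hsub)
        (fun w hw l => H_zero hΩo hu' htf (hsub hw) l i) z hz
      rw [hconst]
      exact hPx.2.2 i
    have step2 : ∀ j k, ∀ z ∈ Metric.ball x ε,
        pd j (fun w => u w k) z = pdckF a ρ Q j k z := by
      intro j k z hz
      have hqd : DifferentiableOn ℝ
          (fun w => pd j (fun v => u v k) w - pdckF a ρ Q j k w) (Metric.ball x ε) :=
        (((pd_smooth hΩo (comp_smooth hΩo hu' k) j).differentiableOn
          (by norm_num)).mono hsub).sub (hpdckd j k).differentiableOn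
      have hpd0 : ∀ w ∈ Metric.ball x ε, ∀ i,
          pd i (fun v => pd j (fun v' => u v' k) v - pdckF a ρ Q j k v) w = 0 := by
        intro w hw i
        rw [pd_sub (pd_diffAt hΩo (pd_smooth hΩo (comp_smooth hΩo hu' k) j) (hsub hw))
          ((hpdckd j k).differentiableAt) i]
        rw [second_id hΩo hu' htf (hsub hw) i j k, pd_pdckF]
        rw [step1 i w hw, step1 j w hw, step1 k w hw]
        ring
      have hconst := const_on_ball hε hqd hpd0 z hz
      have hzero : pd j (fun v => u v k) x - pdckF a ρ Q j k x = 0 :=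
        sub_eq_zero.2 (hPx.2.1 j k)
      have := hconst.trans hzero
      linarith [this]
    have step3 : ∀ k, ∀ z ∈ Metric.ball x ε, u z k = ckField a b ρ Q z k := by
      intro k z hz
      have hrd : DifferentiableOn ℝ
          (fun w => u w k - ckField a b ρ Q w k) (Metric.ball x ε) :=
        (((comp_smooth hΩo hu' k).differentiableOn (by norm_num)).mono hsub).sub
          (hckd k).differentiableOn
      have hpd0 : ∀ w ∈ Metric.ball x ε, ∀ i,
          pd i (fun v => u v k - ckField a b ρ Q v k) w = 0 := by
        intro w hw i
        rw [pd_sub (pd_diffAt hΩo (comp_smooth hΩo hu' k) (hsub hw))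
          ((hckd k).differentiableAt) i]
        rw [step2 i k w hw, pd_ck]
        simp [pdckF]
      have hconst := const_on_ball hε hrd hpd0 z hz
      have hzero : u x k - ckField a b ρ Q x k = 0 := sub_eq_zero.2 (hPx.1 k)
      have := hconst.trans hzero
      linarith [this]
    intro y hy
    exact ⟨fun k => step3 k y hy, fun j k => step2 j k y hy, fun i => step1 i y hy⟩
  -- the good and bad sets
  set S : Set E3 := {x | x ∈ Ω ∧ P x} with hS
  set N : Set E3 := {x | x ∈ Ω ∧ ¬ P x} with hN
  have hSopen : IsOpen S := by
    rw [isOpen_iff_mem_nhds]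
    rintro x ⟨hxΩ, hPx⟩
    obtain ⟨ε, hε, hsub⟩ := Metric.isOpen_iff.1 hΩo x hxΩ
    exact mem_of_superset (Metric.ball_mem_nhds x hε)
      (fun y hy => ⟨hsub hy, hball x hxΩ hPx ε hε hsub y hy⟩)
  have hNopen : IsOpen N := by
    rw [isOpen_iff_mem_nhds]
    rintro x ⟨hxΩ, hnP⟩
    have hcases : (¬ ∀ k, u x k = ckField a b ρ Q x k) ∨
        (¬ ∀ j k, pd j (fun y => u y k) x = pdckF a ρ Q j k x) ∨
        (¬ ∀ i, gu u i x = 2 * a i) := by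
      by_contra hcon
      push_neg at hcon
      exact hnP ⟨hcon.1, hcon.2.1, hcon.2.2⟩
    rcases hcases with h | h | h
    · push_neg at h
      obtain ⟨k, hk⟩ := h
      have hc : ContinuousAt (fun y => u y k - ckField a b ρ Q y k) x :=
        ((comp_smooth hΩo hu' k).continuousOn.continuousAt (hΩo.mem_nhds hxΩ)).sub
          (hckd k).continuous.continuousAt
      have hev := hc.eventually_ne (sub_ne_zero.2 hk)
      filter_upwards [hΩo.mem_nhds hxΩ, hev] with y h1 h2
      exact ⟨h1, fun hPy => h2 (sub_eq_zero.2 (hPy.1 k))⟩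
    · push_neg at h
      obtain ⟨j, k, hk⟩ := h
      have hc : ContinuousAt (fun y => pd j (fun w => u w k) y - pdckF a ρ Q j k y) x :=
        (((pd_smooth hΩo (comp_smooth hΩo hu' k) j).continuousOn).continuousAt
          (hΩo.mem_nhds hxΩ)).sub (hpdckd j k).continuous.continuousAt
      have hev := hc.eventually_ne (sub_ne_zero.2 hk)
      filter_upwards [hΩo.mem_nhds hxΩ, hev] with y h1 h2
      exact ⟨h1, fun hPy => h2 (sub_eq_zero.2 (hPy.2.1 j k))⟩
    · push_neg at h
      obtain ⟨i, hk⟩ := h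
      have hc : ContinuousAt (fun y => gu u i y - 2 * a i) x :=
        ((gu_smooth hΩo hu' i).continuousOn.continuousAt (hΩo.mem_nhds hxΩ)).sub
          continuousAt_const
      have hev := hc.eventually_ne (sub_ne_zero.2 hk)
      filter_upwards [hΩo.mem_nhds hxΩ, hev] with y h1 h2
      exact ⟨h1, fun hPy => h2 (sub_eq_zero.2 (hPy.2.2 i))⟩
  -- connectedness argument
  have hall : ∀ x ∈ Ω, P x := by
    by_contra hcon
    push_neg at hcon
    obtain ⟨z, hzΩ, hznP⟩ := hcon
    have hcover : Ω ⊆ S ∪ N := fun x hx =>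
      (em (P x)).elim (fun h => Or.inl ⟨hx, h⟩) (fun h => Or.inr ⟨hx, h⟩)
    have h1 : (Ω ∩ S).Nonempty := ⟨x₀, hx₀, hx₀, hPx₀⟩
    have h2 : (Ω ∩ N).Nonempty := ⟨z, hzΩ, hzΩ, hznP⟩
    obtain ⟨w, _, ⟨_, hw1⟩, ⟨_, hw2⟩⟩ :=
      hΩc.isPreconnected S N hSopen hNopen hcover h1 h2
    exact hw2 hw1
  -- conclude
  refine ⟨a, b, ρ, Q, ?_, fun x hx => funext (fun k => (hall x hx).1 k)⟩
  ext j k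
  show Q k j = -Q j k
  simp only [Matrix.transpose_apply, Matrix.neg_apply, hQ]
  have hs := hsym htf hx₀ j k
  rcases eq_or_ne j k with h | h
  · subst h
    simp only [if_pos rfl] at hs ⊢
    simp only [hρ]
    simp at hs ⊢
    linarith
  · simp only [if_neg h, if_neg (Ne.symm h)] at hs ⊢
    simp at hs ⊢
    linarith
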